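/- Let U ⊆ ℂ be open and let g : ℂ → ℂ be holomorphic on U and injective on U. Then the complex derivative of g is nonvanishing on U: g'(z) ≠ 0 for every z ∈ U. -/

import Mathlib

/-!
If `g'(z₀) = 0`, then `g` is not constant near `z₀` (it is injective), so the zeros of the
holomorphic function `g'` are isolated and `g' ≠ 0` on a punctured neighbourhood of `z₀`. By the
open mapping theorem the injective map `g` is a homeomorphism from `U` onto the open set `g(U)`;
its inverse `h` is holomorphic near every `w ≠ g(z₀)` and continuous at `g(z₀)`, hence holomorphic
at `g(z₀)` by Riemann's removable singularity theorem. Differentiating `h ∘ g = id` at `z₀` then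
gives `h'(g(z₀)) g'(z₀) = 1`, so `g'(z₀) ≠ 0` after all.
-/

open Filter Set Topology

theorem Set.InjOn.not_eventually_eq_const {X Y : Type*} [TopologicalSpace X] {g : X → Y}
    {U : Set X} {x : X} [(𝓝[≠] x).NeBot] (hinj : InjOn g U) (hU : U ∈ 𝓝 x) :
    ¬ ∀ᶠ z in 𝓝 x, g z = g x := fun hconst ↦ by
  obtain ⟨z, ⟨hzU, hgz⟩, hzx⟩ := (((eventually_mem_set.mpr hU).and hconst).filter_mono
    nhdsWithin_le_nhds |>.and (eventually_mem_nhdsWithin (s := {x}ᶜ))).exists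
  exact hzx (hinj hzU (mem_of_mem_nhds hU) hgz)

theorem AnalyticAt.eventually_deriv_ne_zero {𝕜 E : Type*} [RCLike 𝕜] [NormedAddCommGroup E]
    [NormedSpace 𝕜 E] [CompleteSpace E] {g : 𝕜 → E} {z₀ : 𝕜} (hg : AnalyticAt 𝕜 g z₀)
    (hconst : ¬ ∀ᶠ z in 𝓝 z₀, g z = g z₀) : ∀ᶠ z in 𝓝[≠] z₀, deriv g z ≠ 0 := by
  refine hg.deriv.eventually_eq_zero_or_eventually_ne_zero.resolve_left fun hzero ↦ hconst ?_
  obtain ⟨r, hr, hball⟩ := Metric.eventually_nhds_iff_ball.mp (hg.eventually_analyticAt.and hzero)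
  filter_upwards [Metric.ball_mem_nhds z₀ hr] with z hz
  exact Metric.isOpen_ball.is_const_of_deriv_eq_zero (convex_ball z₀ r).isPreconnected
    (fun w hw ↦ (hball w hw).1.differentiableAt.differentiableWithinAt) (fun w hw ↦ (hball w hw).2)
    hz (Metric.mem_ball_self hr)

theorem DifferentiableOn.isOpenMap_domRestrict_of_injOn {g : ℂ → ℂ} {U : Set ℂ}
    (hg : DifferentiableOn ℂ g U) (hU : IsOpen U) (hinj : InjOn g U) :
    IsOpenMap (U.domRestrict g) := by
  refine isOpenMap_iff_nhds_le.mpr fun z ↦ ?_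
  have hzU : U ∈ 𝓝 (z : ℂ) := hU.mem_nhds z.2
  rw [Set.domRestrict_eq, ← map_map, map_nhds_subtype_val, nhdsWithin_eq_nhds.mpr hzU]
  exact (hg.analyticAt hzU).eventually_constant_or_nhds_le_map_nhds.resolve_left
    (hinj.not_eventually_eq_const hzU)

theorem OpenPartialHomeomorph.differentiableAt_symm_of_eventually_deriv_ne_zero
    (e : OpenPartialHomeomorph ℂ ℂ) {z₀ : ℂ} (hz₀ : z₀ ∈ e.source)
    (he : ∀ᶠ z in 𝓝[≠] z₀, DifferentiableAt ℂ e z ∧ deriv e z ≠ 0) :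
    DifferentiableAt ℂ e.symm (e z₀) := by
  have hsymm : Tendsto e.symm (𝓝[≠] (e z₀)) (𝓝[≠] z₀) := by
    refine tendsto_nhdsWithin_of_tendsto_nhds_of_eventually_within _
      ((e.tendsto_symm hz₀).mono_left nhdsWithin_le_nhds) ?_
    simpa [e.left_inv hz₀] using e.symm.eventually_ne_nhdsWithin (e.map_source hz₀)
  refine (Complex.analyticAt_of_differentiable_on_punctured_nhds_of_continuousAt ?_
    (e.continuousAt_symm (e.map_source hz₀))).differentiableAt
  filter_upwards [hsymm.eventually he,
    nhdsWithin_le_nhds (e.open_target.mem_nhds (e.map_source hz₀))] with w hw hwt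
  exact (e.hasDerivAt_symm hwt hw.2 hw.1.hasDerivAt).differentiableAt

theorem DifferentiableAt.deriv_ne_zero_of_eventually_leftInverse {𝕜 : Type*}
    [NontriviallyNormedField 𝕜] {g h : 𝕜 → 𝕜} {z : 𝕜} (hg : DifferentiableAt 𝕜 g z)
    (hh : DifferentiableAt 𝕜 h (g z)) (hinv : ∀ᶠ y in 𝓝 z, h (g y) = y) : deriv g z ≠ 0 := by
  intro hzero
  have hcomp : HasDerivAt (h ∘ g) (deriv h (g z) * deriv g z) z :=
    hh.hasDerivAt.comp z hg.hasDerivAt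
  have hid : HasDerivAt (h ∘ g) 1 z := (hasDerivAt_id z).congr_of_eventuallyEq hinv
  rw [hzero, mul_zero] at hcomp
  exact zero_ne_one (hcomp.unique hid)

/-- A holomorphic function that is injective on an open set `U ⊆ ℂ` has nonvanishing
complex derivative on `U`. -/
theorem injective_holomorphic_deriv_ne_zero
    (U : Set ℂ) (hU : IsOpen U) (g : ℂ → ℂ)
    (hg : ∀ z ∈ U, DifferentiableAt ℂ g z)
    (hinj : Set.InjOn g U) :
    ∀ z ∈ U, deriv g z ≠ 0 := by
  intro z₀ hz₀
  have hUz₀ : U ∈ 𝓝 z₀ := hU.mem_nhds hz₀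
  have hgU : DifferentiableOn ℂ g U := fun z hz ↦ (hg z hz).differentiableWithinAt
  let e := OpenPartialHomeomorph.ofContinuousOpenRestrict (hinj.toPartialEquiv g U)
    hgU.continuousOn (hgU.isOpenMap_domRestrict_of_injOn hU hinj) hU
  have hderiv : ∀ᶠ z in 𝓝[≠] z₀, deriv g z ≠ 0 :=
    (hgU.analyticAt hUz₀).eventually_deriv_ne_zero (hinj.not_eventually_eq_const hUz₀)
  have hdiff : ∀ᶠ z in 𝓝[≠] z₀, DifferentiableAt ℂ g z :=
    nhdsWithin_le_nhds (mem_of_superset hUz₀ hg)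
  exact (hg z₀ hz₀).deriv_ne_zero_of_eventually_leftInverse
    (e.differentiableAt_symm_of_eventually_deriv_ne_zero hz₀ (hdiff.and hderiv))
    (e.eventually_left_inverse hz₀)
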